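/- arXiv:2504.02944 — 2 statements merged into one kernel-verified Lean document; each statement's English description precedes it below -/
import Mathlib

section
/- Let d ≥ 1, let B be a finite set, and let M : B → Matrix (Fin d) (Fin d) ℂ be a POVM (each M_b positive semidefinite, ∑_b M_b = 1) such that every effect is rank one, i.e. for every b there is a nonzero vector v_b ∈ ℂ^d with M_b = v_b v_bᴴ. Suppose M is nonclassical. Then for every ω ∈ [0,1), there do NOT exist POVMs N : B → Matrix (Fin d) (Fin d) ℂ and K : B → Matrix (Fin d) (Fin d) ℂ such that (i) M_b = ω • N_b + (1−ω) • K_b for all b, (ii) for every β : B → ℝ with ∑_b β(b) • M_b = 0 one has ∑_b β(b) • N_b = 0 and ∑_b β(b) • K_b = 0, and (iii) K is classical. (In other words, the nonclassical fraction of any nonclassical measurement with rank-one effects equals 1.) -/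
/-!
Since `M b = v vᴴ` is rank one and `(1 - ω) K b ≤ M b` in the Loewner order, every `K b` is a real
multiple `t b • M b`. Then `β = t - 1` is a linear dependency of `M` (both `K` and `M` sum to `1`),
so by assumption also of `K`; subtracting the two relations gives `∑ (t b - 1)² • M b = 0`, a sum of
positive semidefinite matrices, so `t = 1`. Thus `K = M`, and `M` would be classical.
-/

open Matrix BigOperators
open scoped ComplexOrder

noncomputable section

/-- The noncontextual measurement-assignment polytope of a single measurement (POVM). -/
def povmPolytope {d : ℕ} {B : Type*} [Fintype B]
    (M : B → Matrix (Fin d) (Fin d) ℂ) : Set (B → ℝ) :=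
  {q | (∀ b, 0 ≤ q b) ∧ (∑ b : B, q b = 1) ∧
    ∀ β : B → ℝ, (∑ b : B, β b • M b = 0) → (∑ b : B, β b * q b = 0)}

/-- A single measurement (POVM) is classical. -/
def IsClassicalPOVM {d : ℕ} {B : Type*} [Fintype B]
    (M : B → Matrix (Fin d) (Fin d) ℂ) : Prop :=
  ∃ (n : ℕ) (G : Fin n → Matrix (Fin d) (Fin d) ℂ) (q : Fin n → B → ℝ),
    (∀ l, (G l).PosSemidef) ∧ (∑ l, G l = 1) ∧
    (∀ l, q l ∈ povmPolytope M) ∧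
    (∀ b : B, M b = ∑ l, q l b • G l)

namespace Matrix

variable {ι 𝕜 : Type*} [Fintype ι] [RCLike 𝕜]

theorem PosSemidef.mulVec_eq_zero_of_le_vecMulVec {A : Matrix ι ι 𝕜} {v w : ι → 𝕜}
    (hA : A.PosSemidef) (hle : (vecMulVec v (star v) - A).PosSemidef)
    (hw : star v ⬝ᵥ w = 0) : A *ᵥ w = 0 := by
  have hvv : star w ⬝ᵥ vecMulVec v (star v) *ᵥ w = 0 := by
    simp [vecMulVec_mulVec, hw]
  have hAw := hle.dotProduct_mulVec_nonneg w
  rw [sub_mulVec, dotProduct_sub, hvv, zero_sub, neg_nonneg] at hAw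
  exact (hA.dotProduct_mulVec_zero_iff w).mp (le_antisymm hAw (hA.dotProduct_mulVec_nonneg w))

theorem IsHermitian.mulVec_eq_smul_of_mulVec_eq_zero {A : Matrix ι ι 𝕜} {v : ι → 𝕜}
    (hA : A.IsHermitian) (hker : ∀ w, star v ⬝ᵥ w = 0 → A *ᵥ w = 0) :
    A *ᵥ v = ((star v ⬝ᵥ A *ᵥ v) / (star v ⬝ᵥ v)) • v := by
  by_cases hv : v = 0
  · simp [hv]
  have hn : star v ⬝ᵥ v ≠ 0 := by rwa [Ne, dotProduct_star_self_eq_zero]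
  set w := A *ᵥ v - ((star v ⬝ᵥ A *ᵥ v) / (star v ⬝ᵥ v)) • v
  have hvw : star v ⬝ᵥ w = 0 := by
    simp only [w, dotProduct_sub, dotProduct_smul, smul_eq_mul, div_mul_cancel₀ _ hn, sub_self]
  have hwv : star w ⬝ᵥ v = 0 := by rw [star_dotProduct, hvw, star_zero]
  -- `w ⊥ v` gives `A w = 0`; as `A` is self-adjoint, also `w ⊥ A v`, hence `w ⊥ w`.
  have hwAv : star w ⬝ᵥ A *ᵥ v = 0 := by
    rw [dotProduct_mulVec, ← hA.eq, ← star_mulVec, hker w hvw, star_zero, zero_dotProduct]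
  have hww : star w ⬝ᵥ w = 0 := by
    rw [dotProduct_sub, dotProduct_smul, hwAv, hwv, smul_zero, sub_self]
  exact sub_eq_zero.mp (dotProduct_star_self_eq_zero.mp hww)

theorem IsHermitian.eq_smul_vecMulVec_of_mulVec_eq_zero {A : Matrix ι ι 𝕜} {v : ι → 𝕜}
    (hA : A.IsHermitian) (hker : ∀ w, star v ⬝ᵥ w = 0 → A *ᵥ w = 0) :
    A = ((star v ⬝ᵥ A *ᵥ v) / (star v ⬝ᵥ v) ^ 2) • vecMulVec v (star v) := by
  classical
  refine ext_of_mulVec_single fun i => ?_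
  by_cases hv : v = 0
  · rw [hker _ (by simp [hv]), hv, zero_vecMulVec, smul_zero, zero_mulVec]
  have hn : star v ⬝ᵥ v ≠ 0 := by rwa [Ne, dotProduct_star_self_eq_zero]
  set x : ι → 𝕜 := Pi.single i 1
  have hx : A *ᵥ (x - ((star v ⬝ᵥ x) / (star v ⬝ᵥ v)) • v) = 0 := hker _ <| by
    rw [dotProduct_sub, dotProduct_smul, smul_eq_mul, div_mul_cancel₀ _ hn, sub_self]
  rw [mulVec_sub, mulVec_smul, hA.mulVec_eq_smul_of_mulVec_eq_zero hker, sub_eq_zero] at hx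
  rw [hx, smul_mulVec, vecMulVec_mulVec, op_smul_eq_smul, smul_smul, smul_smul]
  congr 1
  ring

theorem PosSemidef.exists_eq_smul_vecMulVec_of_le {A : Matrix ι ι 𝕜} {v : ι → 𝕜}
    (hA : A.PosSemidef) (hle : (vecMulVec v (star v) - A).PosSemidef) :
    ∃ c : ℝ, 0 ≤ c ∧ A = c • vecMulVec v (star v) := by
  have hcoeff : 0 ≤ (star v ⬝ᵥ A *ᵥ v) / (star v ⬝ᵥ v) ^ 2 :=
    div_nonneg (hA.dotProduct_mulVec_nonneg v) (pow_nonneg (dotProduct_star_self_nonneg v) 2)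
  obtain ⟨c, hc, hc_eq⟩ := RCLike.nonneg_iff_exists_ofReal.mp hcoeff
  refine ⟨c, hc, ?_⟩
  rw [RCLike.real_smul_eq_coe_smul (K := 𝕜), hc_eq]
  exact hA.1.eq_smul_vecMulVec_of_mulVec_eq_zero fun w hw =>
    hA.mulVec_eq_zero_of_le_vecMulVec hle hw

end Matrix

open scoped MatrixOrder in
theorem Matrix.eq_one_of_smul_preserves_dependencies {ι 𝕜 B : Type*} [RCLike 𝕜] [Fintype B]
    {M : B → Matrix ι ι 𝕜} (hM : ∀ b, (M b).PosSemidef) (hM0 : ∀ b, M b ≠ 0) {t : B → ℝ}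
    (hsum : ∑ b, t b • M b = ∑ b, M b)
    (hdep : ∀ β : B → ℝ, ∑ b, β b • M b = 0 → ∑ b, β b • t b • M b = 0) (b : B) :
    t b = 1 := by
  have hβ : ∑ b, (t b - 1) • M b = 0 := by
    simp only [sub_smul, one_smul, Finset.sum_sub_distrib, hsum, sub_self]
  have hsq : ∑ b, (t b - 1) ^ 2 • M b = 0 := by
    have hsplit : ∀ b, (t b - 1) ^ 2 • M b = (t b - 1) • t b • M b - (t b - 1) • M b :=
      fun b => by rw [smul_smul, ← sub_smul]; congr 1; ring
    rw [Finset.sum_congr rfl fun b _ => hsplit b, Finset.sum_sub_distrib, hdep _ hβ, hβ, sub_zero]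
  have hterm := (Finset.sum_eq_zero_iff_of_nonneg fun b _ =>
    nonneg_iff_posSemidef.mpr ((hM b).smul (sq_nonneg (t b - 1)))).mp hsq b (Finset.mem_univ b)
  rw [smul_eq_zero, pow_eq_zero_iff two_ne_zero, sub_eq_zero] at hterm
  exact hterm.resolve_right (hM0 b)

theorem nonclassical_fraction_of_rank_one_povm_is_one_general
    {d : ℕ} {B : Type*} [Fintype B]
    (M : B → Matrix (Fin d) (Fin d) ℂ)
    (hrankone : ∀ b, ∃ v : Fin d → ℂ, v ≠ 0 ∧
      M b = Matrix.of (fun i j => v i * star (v j)))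
    (hnorm : ∑ b : B, M b = 1)
    (hnc : ¬ IsClassicalPOVM M)
    (ω : ℝ) (hω0 : 0 ≤ ω) (hω1 : ω < 1) :
    ¬ ∃ N K : B → Matrix (Fin d) (Fin d) ℂ,
        (∀ b, (N b).PosSemidef) ∧ (∑ b : B, N b = 1) ∧
        (∀ b, (K b).PosSemidef) ∧ (∑ b : B, K b = 1) ∧
        (∀ b, M b = ω • N b + (1 - ω) • K b) ∧
        (∀ β : B → ℝ, (∑ b : B, β b • M b = 0) →
          (∑ b : B, β b • N b = 0) ∧ (∑ b : B, β b • K b = 0)) ∧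
        IsClassicalPOVM K := by
  rintro ⟨N, K, hN, -, hK, hKsum, hMNK, hdep, hKcl⟩
  choose v hv hMv using hrankone
  replace hMv : ∀ b, M b = vecMulVec (v b) (star (v b)) := hMv
  have hK_smul : ∀ b, ∃ t : ℝ, K b = t • M b := fun b => by
    have hle : (vecMulVec (v b) (star (v b)) - (1 - ω) • K b).PosSemidef := by
      rw [← hMv b, hMNK b, add_sub_cancel_right]
      exact (hN b).smul hω0
    obtain ⟨c, -, hc⟩ := ((hK b).smul (sub_nonneg.mpr hω1.le)).exists_eq_smul_vecMulVec_of_le hle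
    refine ⟨c / (1 - ω), ?_⟩
    rw [hMv b, div_eq_inv_mul, mul_smul, ← hc, inv_smul_smul₀ (sub_pos.mpr hω1).ne']
  choose t ht using hK_smul
  have ht1 : ∀ b, t b = 1 :=
    eq_one_of_smul_preserves_dependencies
      (fun b => hMv b ▸ posSemidef_vecMulVec_self_star (v b))
      (fun b => by simp [hMv b, hv b])
      (by simp only [← ht, hKsum, hnorm])
      (fun β hβ => by simpa only [← ht] using (hdep β hβ).2)
  exact hnc (by convert hKcl using 1; funext b; rw [ht b, ht1 b, one_smul])

theorem nonclassical_fraction_of_rank_one_povm_is_one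
    {d : ℕ} (hd : 1 ≤ d) {B : Type*} [Fintype B]
    (M : B → Matrix (Fin d) (Fin d) ℂ)
    (hrankone : ∀ b, ∃ v : Fin d → ℂ, v ≠ 0 ∧
      M b = Matrix.of (fun i j => v i * star (v j)))
    (hnorm : ∑ b : B, M b = 1)
    (hnc : ¬ IsClassicalPOVM M)
    (ω : ℝ) (hω0 : 0 ≤ ω) (hω1 : ω < 1) :
    ¬ ∃ N K : B → Matrix (Fin d) (Fin d) ℂ,
        (∀ b, (N b).PosSemidef) ∧ (∑ b : B, N b = 1) ∧
        (∀ b, (K b).PosSemidef) ∧ (∑ b : B, K b = 1) ∧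
        (∀ b, M b = ω • N b + (1 - ω) • K b) ∧
        (∀ β : B → ℝ, (∑ b : B, β b • M b = 0) →
          (∑ b : B, β b • N b = 0) ∧ (∑ b : B, β b • K b = 0)) ∧
        IsClassicalPOVM K :=
  nonclassical_fraction_of_rank_one_povm_is_one_general M hrankone hnorm hnc ω hω0 hω1
end
end

section
/- Define the BB84 qubit measurement M : {1,2,3,4} → Matrix (Fin 2) (Fin 2) ℂ by M_b := (1/4)( 1 + cos(πb/2) • σx + sin(πb/2) • σz ), and the four qubit states σ_b := (1/2)( 1 − cos(πb/2) • σx − sin(πb/2) • σz ) (the state with Bloch vector antipodal to the effect M_b). Let K : {1,2,3,4} → Matrix (Fin 2) (Fin 2) ℂ be any POVM (each K_b positive semidefinite, ∑_b K_b = 1) such that for every β : {1,2,3,4} → ℝ with ∑_b β(b) • M_b = 0 one has ∑_b β(b) • K_b = 0 (K satisfies the operational identities of the BB84 measurement), and suppose K is classical. Then ∑_{b=1}^{4} Tr(σ_b K_b) ≥ 1 − √2/2, where each trace is a nonnegative real number. (This is the linear nonclassicality witness for the BB84 measurement obtained from the weight-based dual semidefinite program.) -/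
open Matrix BigOperators Real
open scoped ComplexOrder

noncomputable section

def σx : Matrix (Fin 2) (Fin 2) ℂ := !![0, 1; 1, 0]
def σz : Matrix (Fin 2) (Fin 2) ℂ := !![1, 0; 0, -1]

/-- The BB84 qubit measurement: `M_b = (1/4)(1 + cos(πb/2) σx + sin(πb/2) σz)` for
`b = 1, 2, 3, 4`. -/
def bb84Meas : Fin 4 → Matrix (Fin 2) (Fin 2) ℂ :=
  fun b => (4 : ℝ)⁻¹ •
    ((1 : Matrix (Fin 2) (Fin 2) ℂ) +
      Real.cos (π * ((b : ℕ) + 1) / 2) • σx + Real.sin (π * ((b : ℕ) + 1) / 2) • σz)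

/-- The qubit states with Bloch vectors antipodal to the BB84 effects:
`σ_b = (1/2)(1 − cos(πb/2) σx − sin(πb/2) σz)` for `b = 1, 2, 3, 4`. -/
def bb84Witness : Fin 4 → Matrix (Fin 2) (Fin 2) ℂ :=
  fun b => (2 : ℝ)⁻¹ •
    ((1 : Matrix (Fin 2) (Fin 2) ℂ) -
      Real.cos (π * ((b : ℕ) + 1) / 2) • σx - Real.sin (π * ((b : ℕ) + 1) / 2) • σz)


/-!
A classical model writes `K_b = ∑_λ q_λ(b) G_λ` with each `q_λ` in the polytope of `K`, hence,
by the operational identities, in the polytope of the BB84 measurement. So it suffices to find a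
dual certificate: a constant `c` with `∑_b q(b) σ_b - c 1 ⪰ 0` for every such `q`, because then
`∑_b Tr(σ_b K_b) = ∑_λ Tr((∑_b q_λ(b) σ_b) G_λ) ≥ c ∑_λ Tr G_λ = 2c`. The BB84 identity
`M_1 - M_2 + M_3 - M_4 = 0` forces `q_1 + q_3 = q_2 + q_4 = 1/2`, and for `c = 1/2 - √2/4` the
resulting real symmetric 2×2 matrix has nonnegative diagonal and determinant at least
`q_1 q_3 ≥ 0`.
-/

open scoped MatrixOrder in
theorem Matrix.PosSemidef.trace_mul_nonneg {n 𝕜 : Type*} [Fintype n] [RCLike 𝕜]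
    {A B : Matrix n n 𝕜} (hA : A.PosSemidef) (hB : B.PosSemidef) : 0 ≤ (A * B).trace := by
  classical
  obtain ⟨Y, rfl⟩ := CStarAlgebra.nonneg_iff_eq_star_mul_self.mp hB.nonneg
  rw [← Matrix.mul_assoc, trace_mul_comm, ← Matrix.mul_assoc]
  exact (hA.mul_mul_conjTranspose_same Y).trace_nonneg

theorem Matrix.posSemidef_fin_two_of_sq_le {𝕜 : Type*} [RCLike 𝕜] {a b d : ℝ}
    (ha : 0 ≤ a) (hd : 0 ≤ d) (hb : b ^ 2 ≤ a * d) :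
    (!![(a : 𝕜), b; b, d]).PosSemidef := by
  have hH : (!![(a : 𝕜), b; b, d]).IsHermitian := by
    ext i j; fin_cases i <;> fin_cases j <;> simp
  have htr := hH.trace_eq_sum_eigenvalues
  have hdet := hH.det_eq_prod_eigenvalues
  simp only [trace_fin_two, det_fin_two_of, Fin.sum_univ_two, Fin.prod_univ_two, of_apply,
    cons_val_zero, cons_val_one, cons_val_fin_one] at htr hdet
  norm_cast at htr hdet
  rw [hH.posSemidef_iff_eigenvalues_nonneg]
  intro i
  fin_cases i <;> simp <;> nlinarith

theorem povmPolytope_subset_of_operational_identities {d : ℕ} {B : Type*} [Fintype B]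
    {K M : B → Matrix (Fin d) (Fin d) ℂ}
    (h : ∀ β : B → ℝ, ∑ b, β b • M b = 0 → ∑ b, β b • K b = 0) :
    povmPolytope K ⊆ povmPolytope M :=
  fun _ ⟨hnonneg, hsum, hK⟩ => ⟨hnonneg, hsum, fun β hβ => hK β (h β hβ)⟩

theorem IsClassicalPOVM.le_sum_re_trace_mul {d : ℕ} {B : Type*} [Fintype B]
    {K : B → Matrix (Fin d) (Fin d) ℂ} (hK : IsClassicalPOVM K)
    (W : B → Matrix (Fin d) (Fin d) ℂ) (c : ℝ)
    (hW : ∀ q ∈ povmPolytope K, (∑ b, q b • W b - c • 1).PosSemidef) :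
    c * d ≤ ∑ b, (W b * K b).trace.re := by
  obtain ⟨n, G, q, hG, hGsum, hq, hKG⟩ := hK
  have hbound : ∀ l, c * (G l).trace.re ≤ ∑ b, q l b * (W b * G l).trace.re := by
    intro l
    have := RCLike.nonneg_iff.mp ((hW (q l) (hq l)).trace_mul_nonneg (hG l)) |>.1
    simpa [sub_mul, Finset.sum_mul, trace_sum, trace_sub, Complex.re_sum] using this
  calc c * d = ∑ l, c * (G l).trace.re := by
        rw [← Finset.mul_sum, ← Complex.re_sum, ← trace_sum, hGsum]; simp
    _ ≤ ∑ l, ∑ b, q l b * (W b * G l).trace.re := Finset.sum_le_sum fun l _ => hbound l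
    _ = ∑ b, (W b * K b).trace.re := by
        rw [Finset.sum_comm]
        simp [hKG, Matrix.mul_sum, trace_sum, Complex.re_sum]

lemma bb84_cos_values :
    (fun b : Fin 4 => Real.cos (π * ((b : ℕ) + 1) / 2)) = ![0, -1, 0, 1] := by
  ext b
  fin_cases b <;> simp [mul_add, add_div, mul_div_assoc, Real.cos_add, Real.sin_add,
    show π * (3 / 2) = π / 2 + π by ring]

lemma bb84_sin_values :
    (fun b : Fin 4 => Real.sin (π * ((b : ℕ) + 1) / 2)) = ![1, 0, -1, 0] := by
  ext b
  fin_cases b <;> simp [mul_add, add_div, mul_div_assoc, Real.cos_add, Real.sin_add,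
    show π * (3 / 2) = π / 2 + π by ring]

lemma sum_alternating_smul_bb84Meas :
    ∑ b : Fin 4, (![1, -1, 1, -1] : Fin 4 → ℝ) b • bb84Meas b = 0 := by
  simp only [bb84Meas, congrFun bb84_cos_values, congrFun bb84_sin_values, Fin.sum_univ_four]
  ext i j
  fin_cases i <;> fin_cases j <;> simp [σx, σz]

lemma bb84Witness_eq : bb84Witness =
    ![!![0, 0; 0, 1], !![1/2, 1/2; 1/2, 1/2], !![1, 0; 0, 0], !![1/2, -1/2; -1/2, 1/2]] := by
  ext b i j
  simp only [bb84Witness, congrFun bb84_cos_values, congrFun bb84_sin_values]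
  fin_cases b <;> fin_cases i <;> fin_cases j <;> simp [σx, σz] <;> norm_num

lemma add_eq_half_of_mem_povmPolytope_bb84Meas {q : Fin 4 → ℝ}
    (hq : q ∈ povmPolytope bb84Meas) : q 0 + q 2 = 1 / 2 ∧ q 1 + q 3 = 1 / 2 := by
  obtain ⟨-, hsum, hrel⟩ := hq
  have halt := hrel _ sum_alternating_smul_bb84Meas
  simp only [Fin.sum_univ_four, cons_val_zero, cons_val_one, cons_val, one_mul, neg_mul]
    at hsum halt
  constructor <;> linarith

lemma posSemidef_bb84_certificate {q : Fin 4 → ℝ} (hq : q ∈ povmPolytope bb84Meas) :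
    (∑ b, q b • bb84Witness b - (1 / 2 - √2 / 4 : ℝ) • 1).PosSemidef := by
  obtain ⟨h02, h13⟩ := add_eq_half_of_mem_povmPolytope_bb84Meas hq
  obtain ⟨hq0, hq1, hq2, hq3⟩ : 0 ≤ q 0 ∧ 0 ≤ q 1 ∧ 0 ≤ q 2 ∧ 0 ≤ q 3 :=
    ⟨hq.1 0, hq.1 1, hq.1 2, hq.1 3⟩
  have hA : ∑ b, q b • bb84Witness b - (1 / 2 - √2 / 4 : ℝ) • 1 =
      !![((q 2 + (√2 - 1) / 4 : ℝ) : ℂ), ((q 1 - q 3) / 2 : ℝ);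
        ((q 1 - q 3) / 2 : ℝ), (q 0 + (√2 - 1) / 4 : ℝ)] := by
    have h13' : (q 1 : ℂ) + q 3 = 1 / 2 := by rw [← Complex.ofReal_add, h13]; norm_num
    rw [bb84Witness_eq]
    ext i j
    fin_cases i <;> fin_cases j <;> simp [Fin.sum_univ_four]
    · linear_combination h13' / 2
    · ring
    · ring
    · linear_combination h13' / 2
  rw [hA]
  have hs : √2 ^ 2 = 2 := Real.sq_sqrt (by norm_num)
  have hs1 : 1 ≤ √2 := by nlinarith [Real.sqrt_nonneg 2]
  exact posSemidef_fin_two_of_sq_le (a := q 2 + (√2 - 1) / 4) (b := (q 1 - q 3) / 2)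
    (d := q 0 + (√2 - 1) / 4) (by linarith) (by linarith)
    (by nlinarith [mul_nonneg hq0 hq2, mul_nonneg hq1 hq3])

theorem bb84_nonclassicality_witness_general
    (K : Fin 4 → Matrix (Fin 2) (Fin 2) ℂ)
    (hopid : ∀ β : Fin 4 → ℝ, (∑ b : Fin 4, β b • bb84Meas b = 0) →
      ∑ b : Fin 4, β b • K b = 0)
    (hclassical : IsClassicalPOVM K) :
    1 - Real.sqrt 2 / 2 ≤ ∑ b : Fin 4, ((bb84Witness b * K b).trace.re) := by
  calc 1 - √2 / 2 = (1 / 2 - √2 / 4) * (2 : ℕ) := by push_cast; ring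
    _ ≤ _ := hclassical.le_sum_re_trace_mul bb84Witness _ fun _ hq =>
      posSemidef_bb84_certificate (povmPolytope_subset_of_operational_identities hopid hq)

theorem bb84_nonclassicality_witness
    (K : Fin 4 → Matrix (Fin 2) (Fin 2) ℂ)
    (hKpsd : ∀ b, (K b).PosSemidef)
    (hKnorm : ∑ b : Fin 4, K b = 1)
    (hopid : ∀ β : Fin 4 → ℝ, (∑ b : Fin 4, β b • bb84Meas b = 0) →
      ∑ b : Fin 4, β b • K b = 0)
    (hclassical : IsClassicalPOVM K) :
    1 - Real.sqrt 2 / 2 ≤ ∑ b : Fin 4, ((bb84Witness b * K b).trace.re) :=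
  bb84_nonclassicality_witness_general K hopid hclassical
end
end
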